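/- Let L be a complex Hilbert space and let X, Y ∈ B(L) with X* = -X, Y* = -Y, and XY = YX. On H = L ⊕ L consider the block operator Z = [[X, Y], [Y, -X]] (which satisfies Z* = -Z). Then for every D' ∈ B(L) with D'* = -D', one has ‖Z‖ ≤ ‖Z + D‖, where D = [[D', 0], [0, D']]. -/

import Mathlib

/-!
The rotation `J (ξ, η) = (η, -ξ)` is a unitary of `L ⊕ L` with
`J [[A, B], [C, D]] J⁻¹ = [[D, -C], [-B, A]]`. It conjugates `Z + D` to `D - Z`, so
`‖Z - D‖ = ‖Z + D‖`, and then `2 ‖Z‖ ≤ ‖Z + D‖ + ‖Z - D‖ = 2 ‖Z + D‖`.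
-/

open ContinuousLinearMap

variable {L : Type*} [NormedAddCommGroup L] [InnerProductSpace ℂ L] [CompleteSpace L]

/-- The block operator `[[X, Y], [Z, W]]` on the Hilbert-space direct sum `L ⊕ L`
(realized as `WithLp 2 (L × L)`), acting by `(ξ, η) ↦ (Xξ + Yη, Zξ + Wη)`. -/
noncomputable def blockOp (X Y Z W : L →L[ℂ] L) :
    WithLp 2 (L × L) →L[ℂ] WithLp 2 (L × L) :=
  (WithLp.prodContinuousLinearEquiv 2 ℂ L L).symm.toContinuousLinearMap ∘L
    (((X.coprod Y).prod (Z.coprod W)) ∘L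
      (WithLp.prodContinuousLinearEquiv 2 ℂ L L).toContinuousLinearMap)

theorem norm_le_norm_add_of_norm_sub_le {E : Type*} [SeminormedAddCommGroup E]
    [NormedSpace ℝ E] {a b : E} (h : ‖a - b‖ ≤ ‖a + b‖) : ‖a‖ ≤ ‖a + b‖ := by
  have : 2 * ‖a‖ ≤ ‖a + b‖ + ‖a - b‖ := calc
    2 * ‖a‖ = ‖(a + b) + (a - b)‖ := by rw [← Real.norm_two, ← norm_smul]; congr 1; module
    _ ≤ ‖a + b‖ + ‖a - b‖ := norm_add_le _ _
  linarith

namespace LinearIsometryEquiv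

variable (p : ENNReal) [Fact (1 ≤ p)] (𝕜 E : Type*) [Ring 𝕜] [SeminormedAddCommGroup E]
  [Module 𝕜 E]

noncomputable def withLpProdRotate : WithLp p (E × E) ≃ₗᵢ[𝕜] WithLp p (E × E) :=
  (withLpProdComm p 𝕜 E E).trans (withLpProdCongr p (refl 𝕜 E) (neg 𝕜))

@[simp]
theorem withLpProdRotate_apply (x : WithLp p (E × E)) :
    withLpProdRotate p 𝕜 E x = WithLp.toLp p (x.snd, -x.fst) :=
  rfl

end LinearIsometryEquiv

section BlockOp

variable {V : Type*} [NormedAddCommGroup V] [InnerProductSpace ℂ V]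

theorem blockOp_apply (A B C D : V →L[ℂ] V) (x : WithLp 2 (V × V)) :
    blockOp A B C D x = WithLp.toLp 2 (A x.fst + B x.snd, C x.fst + D x.snd) :=
  rfl

theorem blockOp_add (A B C D A' B' C' D' : V →L[ℂ] V) :
    blockOp A B C D + blockOp A' B' C' D' = blockOp (A + A') (B + B') (C + C') (D + D') := by
  ext x : 1
  apply WithLp.ofLp_injective
  ext <;> simp [blockOp_apply] <;> abel

theorem blockOp_neg (A B C D : V →L[ℂ] V) :
    -blockOp A B C D = blockOp (-A) (-B) (-C) (-D) := by
  ext x : 1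
  apply WithLp.ofLp_injective
  ext <;> simp [blockOp_apply] <;> abel

theorem withLpProdRotate_comp_blockOp (A B C D : V →L[ℂ] V) :
    (LinearIsometryEquiv.withLpProdRotate 2 ℂ V : _ →L[ℂ] _) ∘L blockOp A B C D =
      blockOp D (-C) (-B) A ∘L (LinearIsometryEquiv.withLpProdRotate 2 ℂ V : _ →L[ℂ] _) := by
  ext x : 1
  apply WithLp.ofLp_injective
  ext <;> simp [blockOp_apply, add_comm]

theorem norm_blockOp_rotate (A B C D : V →L[ℂ] V) :
    ‖blockOp D (-C) (-B) A‖ = ‖blockOp A B C D‖ := by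
  rw [← opNorm_comp_linearIsometryEquiv _ (LinearIsometryEquiv.withLpProdRotate 2 ℂ V),
    ← withLpProdRotate_comp_blockOp, opNorm_linearIsometryEquiv_comp]

end BlockOp

theorem minimal_lifting_general (X Y D' : L →L[ℂ] L) :
    ‖blockOp X Y Y (-X)‖ ≤ ‖blockOp X Y Y (-X) + blockOp D' 0 0 D'‖ := by
  refine norm_le_norm_add_of_norm_sub_le (le_of_eq ?_)
  rw [norm_sub_rev, sub_eq_add_neg, blockOp_neg, blockOp_add, blockOp_add,
    ← norm_blockOp_rotate]
  congr 2 <;> abel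

/-- minimality of horizontal liftings: if `X, Y` are commuting anti-Hermitian
operators on `L`, then the block operator `Z = [[X, Y], [Y, -X]]` on `L ⊕ L` satisfies
`‖Z‖ ≤ ‖Z + D‖` for every diagonal `D = [[D', 0], [0, D']]` with `D'` anti-Hermitian. -/
theorem minimal_lifting (X Y D' : L →L[ℂ] L)
    (hX : star X = -X) (hY : star Y = -Y) (hXY : Commute X Y)
    (hD' : star D' = -D') :
    ‖blockOp X Y Y (-X)‖ ≤ ‖blockOp X Y Y (-X) + blockOp D' 0 0 D'‖ :=
  minimal_lifting_general X Y D'
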